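/- Let G admit an (ε,η)-almost-clique decomposition V = V_sparse ∪ C_1 ∪ ... ∪ C_k, let C and C' be two distinct almost-cliques, and let u ∈ C and w ∈ C'. Then |N(u) ∩ N(w)| ≤ 2εΔ. -/

import Mathlib

open Finset

variable {V : Type*} [Fintype V] [DecidableEq V]

/-- Nodes `u, v` are `ε`-similar if `|N(u) ∩ N(v)| ≥ (1−ε)Δ`, where `Δ` is the
maximum degree of `G`. -/
abbrev Similar' (G : SimpleGraph V) [DecidableRel G.Adj] (ε : ℝ) (u v : V) : Prop :=
  (1 - ε) * (G.maxDegree : ℝ) ≤ ((G.neighborFinset u ∩ G.neighborFinset v).card : ℝ)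

/-- Nodes `u, v` are `ε`-friends if they are `ε`-similar and adjacent. -/
abbrev Friends (G : SimpleGraph V) [DecidableRel G.Adj] (ε : ℝ) (u v : V) : Prop :=
  Similar' G ε u v ∧ G.Adj u v

/-- A node is `ε`-dense if it has at least `(1−ε)Δ` `ε`-friends. -/
def IsDense (G : SimpleGraph V) [DecidableRel G.Adj] (ε : ℝ) (v : V) : Prop :=
  (1 - ε) * (G.maxDegree : ℝ) ≤ ((univ.filter (fun w => Friends G ε v w)).card : ℝ)

/-- An `(ε,η)`-almost-clique decomposition of `G`: a partition
`V = V_sparse ∪ C 0 ∪ ... ∪ C (k-1)` such that `V_sparse` contains no `η`-dense node,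
`(1−ε)Δ ≤ |C i| ≤ (1+ε)Δ`, and every `v ∈ C i` has at least `(1−ε)Δ` neighbors in `C i`. -/
structure IsACD (G : SimpleGraph V) [DecidableRel G.Adj] (ε η : ℝ) {k : ℕ}
    (Vsp : Finset V) (C : Fin k → Finset V) : Prop where
  cover : ∀ v : V, v ∈ Vsp ∨ ∃ i, v ∈ C i
  disjoint_sparse : ∀ i, Disjoint Vsp (C i)
  disjoint_cliques : ∀ i j, i ≠ j → Disjoint (C i) (C j)
  sparse_not_dense : ∀ v ∈ Vsp, ¬ IsDense G η v
  card_lower : ∀ i, (1 - ε) * (G.maxDegree : ℝ) ≤ ((C i).card : ℝ)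
  card_upper : ∀ i, ((C i).card : ℝ) ≤ (1 + ε) * (G.maxDegree : ℝ)
  nbr_lower : ∀ i, ∀ v ∈ C i, (1 - ε) * (G.maxDegree : ℝ) ≤ ((G.neighborFinset v ∩ C i).card : ℝ)

theorem Finset.card_inter_le_card_sdiff_add_card_sdiff {α : Type*} [DecidableEq α]
    {X Y : Finset α} (hXY : Disjoint X Y) (s t : Finset α) :
    #(s ∩ t) ≤ #(s \ X) + #(t \ Y) := by
  have hsub : s ∩ t ⊆ (s \ X) ∪ (t \ Y) := by
    intro x hx
    rw [mem_inter] at hx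
    by_cases hxX : x ∈ X
    · exact mem_union_right _ (mem_sdiff.mpr ⟨hx.2, hXY.notMem_of_mem_left_finset hxX⟩)
    · exact mem_union_left _ (mem_sdiff.mpr ⟨hx.1, hxX⟩)
  exact (card_le_card hsub).trans (card_union_le _ _)

theorem SimpleGraph.card_neighborFinset_sdiff_le (G : SimpleGraph V) [DecidableRel G.Adj]
    {ε : ℝ} (v : V) (S : Finset V)
    (hS : (1 - ε) * (G.maxDegree : ℝ) ≤ (#(G.neighborFinset v ∩ S) : ℝ)) :
    (#(G.neighborFinset v \ S) : ℝ) ≤ ε * G.maxDegree := by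
  have hsplit := card_sdiff_add_card_inter (G.neighborFinset v) S
  have hdeg : #(G.neighborFinset v) ≤ G.maxDegree :=
    (G.card_neighborFinset_eq_degree v).trans_le (G.degree_le_maxDegree v)
  have hsplit' : (#(G.neighborFinset v \ S) : ℝ) + #(G.neighborFinset v ∩ S)
      = #(G.neighborFinset v) := by exact_mod_cast hsplit
  have hdeg' : (#(G.neighborFinset v) : ℝ) ≤ G.maxDegree := by exact_mod_cast hdeg
  linarith

theorem IsACD.card_neighborFinset_sdiff_le {G : SimpleGraph V} [DecidableRel G.Adj] {ε η : ℝ}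
    {k : ℕ} {Vsp : Finset V} {C : Fin k → Finset V} (hACD : IsACD G ε η Vsp C)
    {i : Fin k} {v : V} (hv : v ∈ C i) :
    (#(G.neighborFinset v \ C i) : ℝ) ≤ ε * G.maxDegree :=
  G.card_neighborFinset_sdiff_le v (C i) (hACD.nbr_lower i v hv)

-- A common neighbour of `u` and `w` lies outside `C i` or outside `C j`, and each of `u`, `w`
-- has at most `εΔ` neighbours outside its own almost-clique.
theorem stmt5_general (G : SimpleGraph V) [DecidableRel G.Adj] (ε η : ℝ)
    {k : ℕ} (Vsp : Finset V) (C : Fin k → Finset V) (hACD : IsACD G ε η Vsp C)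
    (i j : Fin k) (hij : i ≠ j) (u w : V) (hu : u ∈ C i) (hw : w ∈ C j) :
    ((G.neighborFinset u ∩ G.neighborFinset w).card : ℝ) ≤ 2 * ε * (G.maxDegree : ℝ) := by
  have hcommon := card_inter_le_card_sdiff_add_card_sdiff (hACD.disjoint_cliques i j hij)
    (G.neighborFinset u) (G.neighborFinset w)
  calc ((G.neighborFinset u ∩ G.neighborFinset w).card : ℝ)
      ≤ #(G.neighborFinset u \ C i) + #(G.neighborFinset w \ C j) := by exact_mod_cast hcommon
    _ ≤ ε * G.maxDegree + ε * G.maxDegree :=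
        add_le_add (hACD.card_neighborFinset_sdiff_le hu) (hACD.card_neighborFinset_sdiff_le hw)
    _ = 2 * ε * G.maxDegree := by ring

/-- In an `(ε,η)`-ACD, if `u ∈ C i` and `w ∈ C j` with `i ≠ j`, then
`|N(u) ∩ N(w)| ≤ 2εΔ`. -/
theorem stmt5 (G : SimpleGraph V) [DecidableRel G.Adj] (ε η : ℝ)
    (hε : ε ∈ Set.Ioo (0 : ℝ) 1) (hη : η ∈ Set.Ioo (0 : ℝ) 1)
    {k : ℕ} (Vsp : Finset V) (C : Fin k → Finset V) (hACD : IsACD G ε η Vsp C)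
    (i j : Fin k) (hij : i ≠ j) (u w : V) (hu : u ∈ C i) (hw : w ∈ C j) :
    ((G.neighborFinset u ∩ G.neighborFinset w).card : ℝ) ≤ 2 * ε * (G.maxDegree : ℝ) :=
  stmt5_general G ε η Vsp C hACD i j hij u w hu hw
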